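/- Let a, b, c be real numbers. For all 3×3 matrices P, Q whose entries are real polynomials, the functions x ↦ (P·D₁)(x)·W(x)·Q(x)ᵀ and x ↦ P(x)·W(x)·((Q·D₁)(x))ᵀ are (entrywise) integrable on ℝ and have equal integrals; that is, D₁ is W-symmetric: ⟨P·D₁, Q⟩_W = ⟨P, Q·D₁⟩_W. -/

import Mathlib

open Matrix Polynomial MeasureTheory

/-- The 3×3 Hermite-type weight matrix. -/
noncomputable def W (a b c : ℝ) (x : ℝ) : Matrix (Fin 3) (Fin 3) ℝ :=
  Real.exp (-x ^ 2) •
    !![Real.exp (2 * b * x) + a ^ 2 * x ^ 2, a * x, a * c * x ^ 2;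
       a * x, 1, c * x;
       a * c * x ^ 2, c * x, c ^ 2 * x ^ 2 + 1]

/-- First-order (polynomial) coefficient of the operator D₁. -/
noncomputable def F1p (a b c : ℝ) : Matrix (Fin 3) (Fin 3) (Polynomial ℝ) :=
  !![C (2 * b) - 2 * X, C (-2 * a * b) * X + C (2 * a), 0;
     0, -2 * X, 0;
     0, C (2 * c), -2 * X]

/-- Zeroth-order coefficient of the operator D₁. -/
noncomputable def F0p : Matrix (Fin 3) (Fin 3) (Polynomial ℝ) :=
  !![0, 0, 0; 0, 2, 0; 0, 0, 0]

/-- The right action of the operator D₁ on a matrix polynomial: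
P·D₁ = P'' + P'·F₁ + P·F₀. -/
noncomputable def rightD1 (a b c : ℝ) (P : Matrix (Fin 3) (Fin 3) (Polynomial ℝ)) :
    Matrix (Fin 3) (Fin 3) (Polynomial ℝ) :=
  P.map (fun p => derivative (derivative p))
    + P.map (fun p => derivative p) * F1p a b c + P * F0p

/-- Entrywise evaluation of a matrix polynomial. -/
noncomputable def evalM (P : Matrix (Fin 3) (Fin 3) (Polynomial ℝ)) (x : ℝ) :
    Matrix (Fin 3) (Fin 3) ℝ :=
  P.map (Polynomial.eval x)

/-!
Write `W(x) = e^{-x²} Wpoly(x) + e^{2bx-x²} E₀₀` with `Wpoly` a polynomial matrix. Each summand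
`ρ N` (with `ρ' = r ρ`, `r` a polynomial) satisfies the symmetry equations of `D₁`, and these
make `(P·D₁) ρ N Qᵀ - P ρ N (Q·D₁)ᵀ` the derivative of `ρ Φ` for an explicit polynomial matrix
`Φ` (the concomitant). Every `p(x) e^{cx-x²}` with `p` polynomial is integrable on `ℝ`, so the
integral of such a derivative vanishes.
-/

noncomputable section SymmetryEquations

variable {R : Type*} [CommRing R] {l m n : Type*}

def derivM (A : Matrix l m R[X]) : Matrix l m R[X] :=
  A.map fun p => derivative p

@[simp]
lemma derivM_apply (A : Matrix l m R[X]) (i : l) (j : m) :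
    derivM A i j = derivative (A i j) := rfl

lemma derivM_add (A B : Matrix l m R[X]) : derivM (A + B) = derivM A + derivM B := by
  ext; simp

lemma derivM_sub (A B : Matrix l m R[X]) : derivM (A - B) = derivM A - derivM B := by
  ext; simp

lemma derivM_transpose (A : Matrix l m R[X]) : derivM Aᵀ = (derivM A)ᵀ := rfl

lemma derivM_mul [Fintype m] (A : Matrix l m R[X]) (B : Matrix m n R[X]) :
    derivM (A * B) = derivM A * B + A * derivM B := by
  ext; simp [Matrix.mul_apply, derivative_mul, Finset.sum_add_distrib]

def rightDiffOp [Fintype m] (F₁ F₀ : Matrix m m R[X]) (P : Matrix l m R[X]) : Matrix l m R[X] :=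
  derivM (derivM P) + derivM P * F₁ + P * F₀

/-- If `ρ' = r ρ` for a scalar function `ρ`, then `(ρ Φ)' = ρ · twistedDeriv r Φ`. -/
def twistedDeriv (r : R[X]) (A : Matrix l m R[X]) : Matrix l m R[X] :=
  derivM A + r • A

lemma twistedDeriv_apply (r : R[X]) (A : Matrix l m R[X]) (i : l) (j : m) :
    twistedDeriv r A i j = derivative (A i j) + r * A i j := rfl

lemma twistedDeriv_add (r : R[X]) (A B : Matrix l m R[X]) :
    twistedDeriv r (A + B) = twistedDeriv r A + twistedDeriv r B := by
  simp only [twistedDeriv, derivM_add, smul_add]; abel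

lemma twistedDeriv_sub (r : R[X]) (A B : Matrix l m R[X]) :
    twistedDeriv r (A - B) = twistedDeriv r A - twistedDeriv r B := by
  simp only [twistedDeriv, derivM_sub, smul_sub]; abel

lemma twistedDeriv_mul_mul [Fintype m] [Fintype n] (r : R[X]) (A : Matrix l m R[X])
    (B : Matrix m n R[X]) (C : Matrix n l R[X]) :
    twistedDeriv r (A * B * C)
      = derivM A * B * C + A * twistedDeriv r B * C + A * B * derivM C := by
  simp only [twistedDeriv, derivM_mul, Matrix.add_mul, Matrix.mul_add, Matrix.mul_smul,
    Matrix.smul_mul]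
  abel

/-- The symmetry equations `2 V' = F₁ V + V F₁ᵀ` and `(F₁ V - V')' = F₀ V - V F₀ᵀ` of the operator
`∂² + ∂ F₁ + F₀` for a weight `V = ρ N` with `ρ' = r ρ`, after cancelling the factor `ρ`. -/
structure SymmetryEqns [Fintype m] (F₁ F₀ : Matrix m m R[X]) (r : R[X]) (N : Matrix m m R[X]) :
    Prop where
  first : F₁ * N + N * F₁ᵀ = 2 • twistedDeriv r N
  second : twistedDeriv r (F₁ * N - twistedDeriv r N) = F₀ * N - N * F₀ᵀ

/-- The polynomial factor of the boundary form `P' V Qᵀ - P V Q'ᵀ + P (F₁ V - V') Qᵀ`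
for `V = ρ N`. -/
def concomitant [Fintype m] (F₁ : Matrix m m R[X]) (r : R[X]) (N : Matrix m m R[X])
    (P Q : Matrix l m R[X]) : Matrix l l R[X] :=
  derivM P * N * Qᵀ - P * N * (derivM Q)ᵀ + P * (F₁ * N - twistedDeriv r N) * Qᵀ

theorem SymmetryEqns.twistedDeriv_concomitant [Fintype m] {F₁ F₀ N : Matrix m m R[X]} {r : R[X]}
    (h : SymmetryEqns F₁ F₀ r N) (P Q : Matrix l m R[X]) :
    twistedDeriv r (concomitant F₁ r N P Q)
      = rightDiffOp F₁ F₀ P * N * Qᵀ - P * N * (rightDiffOp F₁ F₀ Q)ᵀ := by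
  have hF (X : Matrix m l R[X]) : F₁ * (N * X) = (2 • twistedDeriv r N - N * F₁ᵀ) * X := by
    rw [← Matrix.mul_assoc, ← eq_sub_of_add_eq h.first]
  rw [concomitant, twistedDeriv_add, twistedDeriv_sub, twistedDeriv_mul_mul, twistedDeriv_mul_mul,
    twistedDeriv_mul_mul, h.second]
  simp only [rightDiffOp, derivM_transpose, Matrix.transpose_add, Matrix.transpose_mul,
    Matrix.add_mul, Matrix.mul_add, Matrix.sub_mul, Matrix.mul_sub, Matrix.mul_assoc]
  simp only [hF, Matrix.sub_mul, Matrix.mul_sub, Matrix.smul_mul, Matrix.mul_smul, Matrix.mul_assoc]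
  abel

end SymmetryEquations

noncomputable section GaussianIntegrals

open Real

lemma integrable_pow_mul_exp_neg_sq (n : ℕ) : Integrable fun x : ℝ => x ^ n * exp (-x ^ 2) := by
  simpa [rpow_natCast] using
    integrable_rpow_mul_exp_neg_mul_sq one_pos (s := n) (by linarith [n.cast_nonneg (α := ℝ)])

lemma integrable_eval_mul_exp_neg_sq (p : ℝ[X]) :
    Integrable fun x : ℝ => p.eval x * exp (-x ^ 2) := by
  induction p using Polynomial.induction_on' with
  | add p q hp hq => simpa [add_mul] using hp.fun_add hq
  | monomial n a => simpa [mul_assoc] using (integrable_pow_mul_exp_neg_sq n).const_mul a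

def polyGauss (c : ℝ) (p : ℝ[X]) (x : ℝ) : ℝ :=
  p.eval x * exp (c * x - x ^ 2)

lemma polyGauss_sub (c : ℝ) (p q : ℝ[X]) (x : ℝ) :
    polyGauss c (p - q) x = polyGauss c p x - polyGauss c q x := by
  simp [polyGauss, sub_mul]

lemma integrable_polyGauss (c : ℝ) (p : ℝ[X]) : Integrable (polyGauss c p) := by
  -- complete the square: `c x - x² = c²/4 - (x - c/2)²`
  have h := ((integrable_eval_mul_exp_neg_sq (p.comp (X + C (c / 2)))).const_mul
    (exp (c ^ 2 / 4))).comp_sub_right (c / 2)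
  refine h.congr (.of_forall fun x => ?_)
  simp only [polyGauss, eval_comp, eval_add, eval_X, eval_C, sub_add_cancel]
  rw [mul_left_comm, ← exp_add]
  ring_nf

lemma hasDerivAt_polyGauss (c : ℝ) (p : ℝ[X]) (x : ℝ) :
    HasDerivAt (polyGauss c p) (polyGauss c (derivative p + (C c - 2 * X) * p) x) x := by
  have hexp : HasDerivAt (fun x : ℝ => c * x - x ^ 2) (c - 2 * x) x := by
    simpa using ((hasDerivAt_id x).const_mul c).fun_sub (hasDerivAt_pow 2 x)
  refine ((p.hasDerivAt x).fun_mul hexp.exp).congr_deriv ?_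
  simp only [polyGauss, eval_add, eval_mul, eval_sub, eval_C, eval_X, eval_ofNat]
  ring

lemma integral_polyGauss_twisted_eq_zero (c : ℝ) (p : ℝ[X]) :
    ∫ x, polyGauss c (derivative p + (C c - 2 * X) * p) x = 0 :=
  integral_eq_zero_of_hasDerivAt_of_integrable (hasDerivAt_polyGauss c p)
    (integrable_polyGauss c _) (integrable_polyGauss c p)

theorem SymmetryEqns.integral_polyGauss_sub_eq_zero {m l : Type*} [Fintype m]
    {F₁ F₀ N : Matrix m m ℝ[X]} {c : ℝ} (h : SymmetryEqns F₁ F₀ (C c - 2 * X) N)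
    (P Q : Matrix l m ℝ[X]) (i j : l) :
    ∫ x, (polyGauss c ((rightDiffOp F₁ F₀ P * N * Qᵀ) i j) x
      - polyGauss c ((P * N * (rightDiffOp F₁ F₀ Q)ᵀ) i j) x) = 0 := by
  simp_rw [← polyGauss_sub, ← Matrix.sub_apply, ← h.twistedDeriv_concomitant, twistedDeriv_apply]
  exact integral_polyGauss_twisted_eq_zero c _

end GaussianIntegrals

noncomputable section HermiteWeight

def Wpoly (a c : ℝ) : Matrix (Fin 3) (Fin 3) ℝ[X] :=
  !![C (a ^ 2) * X ^ 2, C a * X, C (a * c) * X ^ 2;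
     C a * X, 1, C c * X;
     C (a * c) * X ^ 2, C c * X, C (c ^ 2) * X ^ 2 + 1]

lemma rightD1_eq (a b c : ℝ) (P : Matrix (Fin 3) (Fin 3) ℝ[X]) :
    rightD1 a b c P = rightDiffOp (F1p a b c) F0p P := by
  rw [rightD1, rightDiffOp, derivM, derivM, Matrix.map_map]
  rfl

lemma symmetryEqns_Wpoly (a b c : ℝ) :
    SymmetryEqns (F1p a b c) F0p (C 0 - 2 * X) (Wpoly a c) := by
  constructor <;>
  · ext i j : 1
    fin_cases i <;> fin_cases j <;>
    · simp only [twistedDeriv, Wpoly, F1p, F0p, Matrix.mul_apply, Fin.sum_univ_three,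
        Matrix.transpose_apply, Matrix.add_apply, Matrix.sub_apply, Matrix.smul_apply,
        derivM_apply, smul_eq_mul, Matrix.of_apply, Matrix.cons_val', Matrix.cons_val_zero,
        Matrix.cons_val_one, Matrix.cons_val_two, Matrix.vecHead, Matrix.vecTail,
        Matrix.cons_val_succ, Function.comp, Fin.mk_zero, Fin.mk_one, Fin.reduceFinMk]
      simp only [derivative_add, derivative_sub, derivative_mul, derivative_C, derivative_X,
        derivative_pow, derivative_ofNat, derivative_one, derivative_zero, derivative_neg,
        C_mul, C_pow, C_neg, C_0, map_ofNat, map_natCast, Nat.cast_ofNat]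
      ring

lemma symmetryEqns_single (a b c : ℝ) :
    SymmetryEqns (F1p a b c) F0p (C (2 * b) - 2 * X) (Matrix.single 0 0 1) := by
  constructor <;>
  · ext i j : 1
    fin_cases i <;> fin_cases j <;>
    · simp only [twistedDeriv, F1p, F0p, Matrix.mul_apply, Fin.sum_univ_three, Matrix.single_apply,
        Matrix.transpose_apply, Matrix.add_apply, Matrix.sub_apply, Matrix.smul_apply,
        derivM_apply, smul_eq_mul, Matrix.of_apply, Matrix.cons_val', Matrix.cons_val_zero,
        Matrix.cons_val_one, Matrix.cons_val_two, Matrix.vecHead, Matrix.vecTail,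
        Matrix.cons_val_succ, Function.comp, Fin.mk_zero, Fin.mk_one, Fin.reduceFinMk,
        Fin.reduceEq, and_self, and_false, false_and, ↓reduceIte]
      simp only [derivative_add, derivative_sub, derivative_mul, derivative_C, derivative_X,
        derivative_ofNat, derivative_one, derivative_zero, derivative_neg, C_mul, C_neg, map_ofNat]
      ring

lemma evalM_apply (A : Matrix (Fin 3) (Fin 3) ℝ[X]) (x : ℝ) (i j : Fin 3) :
    evalM A x i j = (A i j).eval x :=
  rfl

lemma evalM_mul (A B : Matrix (Fin 3) (Fin 3) ℝ[X]) (x : ℝ) :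
    evalM (A * B) x = evalM A x * evalM B x :=
  Matrix.map_mul (f := evalRingHom x)

lemma evalM_transpose (A : Matrix (Fin 3) (Fin 3) ℝ[X]) (x : ℝ) : evalM Aᵀ x = (evalM A x)ᵀ :=
  rfl

lemma W_eq_smul_add_smul (a b c x : ℝ) :
    W a b c x = Real.exp (0 * x - x ^ 2) • evalM (Wpoly a c) x
      + Real.exp (2 * b * x - x ^ 2) • evalM (Matrix.single 0 0 1) x := by
  have hsplit : Real.exp (2 * b * x - x ^ 2) = Real.exp (-x ^ 2) * Real.exp (2 * b * x) := by
    rw [← Real.exp_add, neg_add_eq_sub]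
  ext i j
  fin_cases i <;> fin_cases j <;> simp [W, Wpoly, evalM, hsplit]
  ring

lemma evalM_mul_W_mul_transpose_apply (a b c : ℝ) (R S : Matrix (Fin 3) (Fin 3) ℝ[X]) (x : ℝ)
    (i j : Fin 3) :
    (evalM R x * W a b c x * (evalM S x)ᵀ) i j
      = polyGauss 0 ((R * Wpoly a c * Sᵀ) i j) x
        + polyGauss (2 * b)
            ((R * (Matrix.single 0 0 1 : Matrix (Fin 3) (Fin 3) ℝ[X]) * Sᵀ) i j) x := by
  rw [W_eq_smul_add_smul, Matrix.mul_add, Matrix.add_mul, Matrix.mul_smul, Matrix.smul_mul,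
    Matrix.mul_smul, Matrix.smul_mul, ← evalM_transpose, ← evalM_mul, ← evalM_mul, ← evalM_mul,
    ← evalM_mul]
  simp only [Matrix.add_apply, Matrix.smul_apply, smul_eq_mul, evalM_apply, polyGauss]
  ring

end HermiteWeight

/-- the operator D₁ is W-symmetric: for all matrix polynomials P, Q the
functions (P·D₁)(x)·W(x)·Q(x)ᵀ and P(x)·W(x)·((Q·D₁)(x))ᵀ are entrywise integrable
on ℝ and ⟨P·D₁, Q⟩_W = ⟨P, Q·D₁⟩_W. -/
theorem D1_W_symmetric (a b c : ℝ) (P Q : Matrix (Fin 3) (Fin 3) (Polynomial ℝ)) :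
    (∀ i j, Integrable
        (fun x => (evalM (rightD1 a b c P) x * W a b c x * (evalM Q x)ᵀ) i j)) ∧
    (∀ i j, Integrable
        (fun x => (evalM P x * W a b c x * (evalM (rightD1 a b c Q) x)ᵀ) i j)) ∧
    (∀ i j, (∫ x, (evalM (rightD1 a b c P) x * W a b c x * (evalM Q x)ᵀ) i j)
        = ∫ x, (evalM P x * W a b c x * (evalM (rightD1 a b c Q) x)ᵀ) i j) := by
  have hint (R S : Matrix (Fin 3) (Fin 3) ℝ[X]) (i j : Fin 3) :
      Integrable fun x => (evalM R x * W a b c x * (evalM S x)ᵀ) i j := by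
    simp_rw [evalM_mul_W_mul_transpose_apply]
    exact (integrable_polyGauss _ _).fun_add (integrable_polyGauss _ _)
  refine ⟨fun i j => hint _ _ i j, fun i j => hint _ _ i j, fun i j => ?_⟩
  rw [← sub_eq_zero, ← integral_sub (hint _ _ i j) (hint _ _ i j)]
  simp_rw [evalM_mul_W_mul_transpose_apply, add_sub_add_comm, rightD1_eq]
  rw [integral_add ((integrable_polyGauss _ _).sub' (integrable_polyGauss _ _))
      ((integrable_polyGauss _ _).sub' (integrable_polyGauss _ _)),
    (symmetryEqns_Wpoly a b c).integral_polyGauss_sub_eq_zero,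
    (symmetryEqns_single a b c).integral_polyGauss_sub_eq_zero, add_zero]
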